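/- Let G = (X, E) be a finite simple graph that is 2-connected and has more than three vertices. Then for every edge e of G, at least one of the graphs G/e (the contraction of e) or G − e (the deletion of e) is 2-connected. -/

import Mathlib

/-- A finite simple graph `G` is 2-connected if it has more than two vertices,
is connected, and removing any single vertex (with all incident edges) leaves
a connected graph. -/
def TwoConnected {V : Type*} [Fintype V] (G : SimpleGraph V) : Prop :=
  2 < Fintype.card V ∧ G.Connected ∧
    ∀ v : V, (SimpleGraph.induce ({v}ᶜ : Set V) G).Connected

/-- Contraction of the edge `{x, y}` of a simple graph `G`: the vertex `y` is
identified with the vertex `x` (so the vertex set is `{v // v ≠ y}`); parallel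
edges are merged and loops are deleted. -/
def SimpleGraph.contractEdge {X : Type*} (G : SimpleGraph X) (x y : X) :
    SimpleGraph {v : X // v ≠ y} where
  Adj a b := a ≠ b ∧
    (G.Adj a.1 b.1 ∨ (a.1 = x ∧ G.Adj y b.1) ∨ (b.1 = x ∧ G.Adj y a.1))
  symm := by
    constructor
    rintro a b ⟨hab, h⟩
    refine ⟨hab.symm, ?_⟩
    rcases h with h | ⟨h1, h2⟩ | ⟨h1, h2⟩
    · exact Or.inl h.symm
    · exact Or.inr (Or.inr ⟨h1, h2⟩)
    · exact Or.inr (Or.inl ⟨h1, h2⟩)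
  loopless := by constructor; rintro a ⟨h, -⟩; exact h rfl

/-!
If `G - {x, y}` is connected, the contraction `G/xy` is 2-connected: deleting the merged vertex
leaves `G - {x, y}`, and deleting any other vertex `w` leaves an image of the connected graph
`G - w`. Otherwise, for a third vertex `w`, some component `C` of `G - {x, y}` misses `w`. As
`G - y` is connected, a walk in it from `C` to `x` enters `x` from `C`, so `x` has a neighbour
in `C`; likewise `y`. Hence `x` and `y` are joined through `C` in `G - xy - w`, i.e. `xy` is not
a bridge of `G - w` (nor of `G`), and `G - xy` is 2-connected.
-/

theorem Set.insert_compl_pair {V : Type*} {x y : V} (hxy : x ≠ y) :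
    insert x ({x, y}ᶜ : Set V) = {y}ᶜ := by
  ext v
  by_cases v = x <;> simp_all

namespace SimpleGraph

variable {V W : Type*} {G : SimpleGraph V} {H : SimpleGraph W}

theorem Connected.of_surjective_of_adj (hG : G.Connected) (f : V → W)
    (hf : Function.Surjective f) (hadj : ∀ ⦃a b⦄, G.Adj a b → f a = f b ∨ H.Adj (f a) (f b)) :
    H.Connected := by
  have hreach : ∀ a b, H.Reachable (f a) (f b) := fun a b => by
    rw [reachable_iff_reflTransGen]
    refine ((reachable_iff_reflTransGen a b).mp (hG a b)).lift' f fun a b h => ?_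
    rcases hadj h with heq | hH
    · show Relation.ReflTransGen H.Adj (f a) (f b)
      rw [heq]
    · exact .single hH
  refine (connected_iff _).mpr ⟨fun u v => ?_, hG.nonempty.map f⟩
  obtain ⟨a, rfl⟩ := hf u
  obtain ⟨b, rfl⟩ := hf v
  exact hreach a b

theorem Connected.induce_image (f : V → W)
    (hadj : ∀ ⦃a b⦄, G.Adj a b → f a = f b ∨ H.Adj (f a) (f b)) {t : Set V}
    (ht : (G.induce t).Connected) : (H.induce (f '' t)).Connected :=
  ht.of_surjective_of_adj (fun z => ⟨f z, Set.mem_image_of_mem f z.2⟩)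
    (by rintro ⟨_, z, hz, rfl⟩; exact ⟨⟨z, hz⟩, rfl⟩)
    fun _ _ h => (hadj h).imp Subtype.ext id

theorem ConnectedComponent.exists_adj_of_connected_induce_insert {s : Set V} {x : V}
    (hx : x ∉ s) (hconn : (G.induce (insert x s)).Connected)
    (C : (G.induce s).ConnectedComponent) : ∃ v ∈ C.supp, G.Adj v.1 x := by
  obtain ⟨c, rfl⟩ := C.exists_rep
  obtain ⟨p⟩ := hconn.preconnected ⟨c.1, Set.mem_insert_of_mem x c.2⟩ ⟨x, Set.mem_insert x s⟩
  obtain ⟨d, -, ⟨hs, hdC⟩, hd⟩ := p.exists_boundary_dart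
    {z | ∃ h : z.1 ∈ s, (⟨z.1, h⟩ : s) ∈ ((G.induce s).connectedComponentMk c).supp}
    ⟨c.2, rfl⟩ (fun ⟨h, _⟩ => hx h)
  rcases d.snd.2 with hsnd | hsnd
  · have hadj : G.Adj d.fst.1 d.snd.1 := d.adj
    rw [hsnd] at hadj
    exact ⟨⟨_, hs⟩, hdC, hadj⟩
  · exact (hd ⟨hsnd, (ConnectedComponent.mem_supp_congr_adj _ (v := ⟨_, hs⟩) d.adj).mp hdC⟩).elim

variable {x y w : V}

theorem induce_deleteEdges_singleton {s : Set V} (a b : s) :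
    (G.deleteEdges {s(a.1, b.1)}).induce s = (G.induce s).deleteEdges {s(a, b)} := by
  ext u v
  simp [Subtype.ext_iff]

theorem induce_deleteEdges_singleton_of_notMem {s : Set V} (hx : x ∉ s) :
    (G.deleteEdges {s(x, y)}).induce s = G.induce s := by
  ext u v
  simp only [comap_adj, Function.Embedding.subtype_apply, deleteEdges_adj, Set.mem_singleton_iff,
    Sym2.eq_iff, and_iff_left_iff_imp]
  rintro - (⟨rfl, -⟩ | ⟨-, rfl⟩)
  · exact hx u.2
  · exact hx v.2

theorem reachable_deleteEdges_induce_of_not_connected (hxy : x ≠ y)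
    (hx : (G.induce {x}ᶜ).Connected) (hy : (G.induce {y}ᶜ).Connected)
    (hK : ¬ (G.induce {x, y}ᶜ).Connected) (hwx : w ≠ x) (hwy : w ≠ y) :
    ((G.deleteEdges {s(x, y)}).induce {w}ᶜ).Reachable ⟨x, hwx.symm⟩ ⟨y, hwy.symm⟩ := by
  set K := G.induce {x, y}ᶜ
  have hw : w ∈ ({x, y}ᶜ : Set V) := by simp [hwx, hwy]
  have : Nonempty ({x, y}ᶜ : Set V) := ⟨⟨w, hw⟩⟩
  have : Nontrivial K.ConnectedComponent := by
    rw [← not_subsingleton_iff_nontrivial]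
    exact fun h => hK ⟨fun a b => ConnectedComponent.exact (Subsingleton.elim _ _)⟩
  obtain ⟨C, hC⟩ := exists_ne (K.connectedComponentMk ⟨w, hw⟩)
  obtain ⟨v₁, hv₁, hadj₁⟩ := C.exists_adj_of_connected_induce_insert (x := x)
    (by simp) (by rwa [Set.insert_compl_pair hxy])
  obtain ⟨v₂, hv₂, hadj₂⟩ := C.exists_adj_of_connected_induce_insert (x := y)
    (by simp) (by rwa [Set.pair_comm, Set.insert_compl_pair hxy.symm])
  have hne : ∀ {a b : V}, a ∈ ({x, y}ᶜ : Set V) → s(a, b) ∉ ({s(x, y)} : Set (Sym2 V)) := by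
    rintro a b ha h
    rcases Sym2.eq_iff.mp h with ⟨rfl, -⟩ | ⟨rfl, -⟩ <;> simp at ha
  let φ : C.toSimpleGraph →g (G.deleteEdges {s(x, y)}).induce {w}ᶜ :=
    { toFun z := ⟨z.1.1, fun h => hC (by rw [← z.2]; congr 1; exact Subtype.ext h)⟩
      map_rel' := fun {a _} hab => deleteEdges_adj.mpr ⟨hab, hne a.1.2⟩ }
  have h₁ : ((G.deleteEdges {s(x, y)}).induce {w}ᶜ).Adj ⟨x, hwx.symm⟩ (φ ⟨v₁, hv₁⟩) :=
    deleteEdges_adj.mpr ⟨hadj₁.symm, fun h => hne v₁.2 (Sym2.eq_swap.trans h)⟩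
  have h₂ : ((G.deleteEdges {s(x, y)}).induce {w}ᶜ).Adj (φ ⟨v₂, hv₂⟩) ⟨y, hwy.symm⟩ :=
    deleteEdges_adj.mpr ⟨hadj₂, hne v₂.2⟩
  exact h₁.reachable.trans (((C.reachable_toSimpleGraph hv₁ hv₂).map φ).trans h₂.reachable)

end SimpleGraph

open SimpleGraph

section

variable {V : Type*} [Fintype V] {G : SimpleGraph V} {x y : V}

theorem TwoConnected.deleteEdges_of_not_connected_induce (hG : TwoConnected G) (hxy : x ≠ y)
    (hK : ¬ (G.induce {x, y}ᶜ).Connected) : TwoConnected (G.deleteEdges {s(x, y)}) := by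
  obtain ⟨hcard, hconn, hdel⟩ := hG
  have hreach := fun w => reachable_deleteEdges_induce_of_not_connected (w := w) hxy
    (hdel x) (hdel y) hK
  refine ⟨hcard, hconn.connected_delete_edge_of_not_isBridge ?_, fun w => ?_⟩
  · classical
    obtain ⟨w, -, hw⟩ := Finset.exists_mem_notMem_of_card_lt_card
      (s := {x, y}) (t := Finset.univ) ((Finset.card_le_two).trans_lt hcard)
    simp only [Finset.mem_insert, Finset.mem_singleton, not_or] at hw
    rw [isBridge_iff, not_not]
    exact (hreach w hw.1 hw.2).map (Embedding.induce _).toHom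
  · rcases eq_or_ne w x with rfl | hwx
    · rw [induce_deleteEdges_singleton_of_notMem (by simp)]
      exact hdel w
    rcases eq_or_ne w y with rfl | hwy
    · rw [Sym2.eq_swap, induce_deleteEdges_singleton_of_notMem (by simp)]
      exact hdel w
    rw [induce_deleteEdges_singleton ⟨x, hwx.symm⟩ ⟨y, hwy.symm⟩]
    refine (hdel w).connected_delete_edge_of_not_isBridge ?_
    rw [isBridge_iff, not_not, ← induce_deleteEdges_singleton]
    exact hreach w hwx hwy

end

section

variable {V : Type*} [DecidableEq V] {G : SimpleGraph V} {x y : V}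

def contractEdgeMap (hxy : x ≠ y) (v : V) : {v : V // v ≠ y} :=
  if h : v = y then ⟨x, hxy⟩ else ⟨v, h⟩

theorem contractEdgeMap_of_ne (hxy : x ≠ y) {v : V} (hv : v ≠ y) :
    contractEdgeMap hxy v = ⟨v, hv⟩ :=
  dif_neg hv

theorem contractEdgeMap_surjective (hxy : x ≠ y) : Function.Surjective (contractEdgeMap hxy) :=
  fun u => ⟨u.1, contractEdgeMap_of_ne hxy u.2⟩

theorem contractEdgeMap_adj (hxy : x ≠ y) ⦃a b : V⦄ (hab : G.Adj a b) :
    contractEdgeMap hxy a = contractEdgeMap hxy b ∨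
      (G.contractEdge x y).Adj (contractEdgeMap hxy a) (contractEdgeMap hxy b) := by
  refine or_iff_not_imp_left.mpr fun hne => ⟨hne, ?_⟩
  by_cases ha : a = y <;> by_cases hb : b = y
  · exact (hab.ne (ha.trans hb.symm)).elim
  · subst ha
    simp [contractEdgeMap, hb, hab]
  · subst hb
    simp [contractEdgeMap, ha, hab.symm]
  · simp [contractEdgeMap, ha, hb, hab]

theorem image_contractEdgeMap_compl_pair (hxy : x ≠ y) :
    contractEdgeMap hxy '' {x, y}ᶜ = {⟨x, hxy⟩}ᶜ := by
  ext u
  constructor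
  · rintro ⟨v, hv, rfl⟩
    simp only [Set.mem_compl_iff, Set.mem_insert_iff, Set.mem_singleton_iff, not_or] at hv
    simp [contractEdgeMap_of_ne hxy hv.2, hv.1]
  · intro hu
    refine ⟨u.1, ?_, contractEdgeMap_of_ne hxy u.2⟩
    simp only [Set.mem_compl_iff, Set.mem_singleton_iff, Subtype.ext_iff] at hu
    simp [hu, u.2]

theorem image_contractEdgeMap_compl_singleton (hxy : x ≠ y) {w : {v : V // v ≠ y}}
    (hw : w.1 ≠ x) : contractEdgeMap hxy '' {w.1}ᶜ = {w}ᶜ := by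
  ext u
  constructor
  · rintro ⟨v, hv, rfl⟩
    by_cases hvy : v = y
    · simp [contractEdgeMap, hvy, Subtype.ext_iff, hw.symm]
    · simp only [Set.mem_compl_iff, Set.mem_singleton_iff] at hv
      simp [contractEdgeMap_of_ne hxy hvy, Subtype.ext_iff, hv]
  · intro hu
    refine ⟨u.1, ?_, contractEdgeMap_of_ne hxy u.2⟩
    simpa [Subtype.ext_iff] using hu

theorem TwoConnected.contractEdge_of_connected_induce [Fintype V] (hG : TwoConnected G)
    (hV : 3 < Fintype.card V) (hxy : x ≠ y) (hK : (G.induce {x, y}ᶜ).Connected) :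
    TwoConnected (G.contractEdge x y) := by
  obtain ⟨-, hconn, hdel⟩ := hG
  refine ⟨?_, hconn.of_surjective_of_adj _ (contractEdgeMap_surjective hxy)
    (contractEdgeMap_adj hxy), fun w => ?_⟩
  · rw [Fintype.card_subtype_compl, Fintype.card_subtype_eq]
    omega
  by_cases hw : w.1 = x
  · obtain rfl : w = ⟨x, hxy⟩ := Subtype.ext hw
    rw [← image_contractEdgeMap_compl_pair hxy]
    exact hK.induce_image _ (contractEdgeMap_adj hxy)
  · rw [← image_contractEdgeMap_compl_singleton hxy hw]
    exact (hdel w.1).induce_image _ (contractEdgeMap_adj hxy)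

end

/-- If a finite simple graph is 2-connected and has more than three vertices,
then for every edge `e`, at least one of the contraction `G/e` or the deletion
`G - e` is 2-connected. -/
theorem contract_or_delete_twoConnected {X : Type*} [Fintype X] [DecidableEq X]
    (G : SimpleGraph X) (h2 : TwoConnected G) (hV : 3 < Fintype.card X)
    (x y : X) (hxy : G.Adj x y) :
    TwoConnected (G.contractEdge x y) ∨
      TwoConnected (G.deleteEdges {s(x, y)}) := by
  by_cases hK : (G.induce {x, y}ᶜ).Connected
  · exact Or.inl (h2.contractEdge_of_connected_induce hV hxy.ne hK)
  · exact Or.inr (h2.deleteEdges_of_not_connected_induce hxy.ne hK)
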